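/- Let D be a GSHDS in an abelian p-group G with exp(G) = p^s, p odd, and let 0 ≤ k ≤ s−1. Write the integer constants a_{p^k}, b_{p^k} defined by D(x)^{p^k} = c_{p^k}·1 + a_{p^k}D(x) + b_{p^k}D(x^{n₀}) in ℤ[G]. Then a_{p^k} − b_{p^k} = (1/2^{p^k−1}) · Σ_{f=0}^{(p^k−1)/2} C(p^k, 2f+1) · p^{(2α+1)f} · χₚ(−1)^f, where |G| = p^{2α+1}, and the exact power of p dividing a_{p^k} − b_{p^k} is p^k. -/

import Mathlib

open Finset

/-- `DS n D` represents `D(xⁿ) = ∑_{g ∈ D} x^{n·g}` in the integral group algebra `ℤ[G]`. -/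
noncomputable def DS {G : Type} [AddCommGroup G] (n : ℤ) (D : Finset G) :
    AddMonoidAlgebra ℤ G := ∑ g ∈ D, AddMonoidAlgebra.single (n • g) 1

/-- `GS G` represents `G(x) = ∑_{g ∈ G} x^g` in `ℤ[G]`. -/
noncomputable def GS (G : Type) [AddCommGroup G] [Fintype G] :
    AddMonoidAlgebra ℤ G := ∑ g : G, AddMonoidAlgebra.single g 1

/-!
Put `θ = D(x) - D(x^{n₀})`. Modulo the ideal generated by `G(x)` the defining equations give
`2 D(x) ≡ -1 + θ`, `2 D(x^{n₀}) ≡ -1 - θ` and `θ² ≡ 1 - 4 (k₀ - λ)`. Comparing augmentations,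
`1 - 4 (k₀ - λ) = |G| t`, and the constant term of `θ²` is `(|G| - 1) t`; since the coefficients
of `θ` lie in `{0, ±1}` and vanish at `0`, `|t| ≤ 1`, and reducing modulo `4` gives `t = χₚ(-1)`.
Multiplying `D(x)^{p^k} = c + a D(x) + b D(x^{n₀})` by `2^{p^k}` and expanding `(-1 + θ)^{p^k}`
binomially, the `θ`-coefficients give `2^{p^k-1} (a - b) = Σ C(p^k, 2f+1) (p^{2α+1} χₚ(-1))^f`:
`1` and `θ` stay independent modulo `G(x)`, because multiples of `G(x)` have constant coefficients
while `θ` takes both values `1` and `-1` away from `0`. In this sum the term `f = 0` is `p^k`, and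
every other term is divisible by `p^{2α+1}`, hence by `p^{k+1}`, as `k < s ≤ 2α + 1`.
-/

open AddMonoidAlgebra

section GroupRing

variable {G : Type} [AddCommGroup G]

variable (G) in
noncomputable abbrev augmentation : AddMonoidAlgebra ℤ G →ₐ[ℤ] ℤ := lift ℤ ℤ G 1

lemma augmentation_eq_sum (f : AddMonoidAlgebra ℤ G) :
    augmentation G f = f.coeff.sum fun _ r ↦ r := by
  simp [lift_apply]

lemma augmentation_DS (n : ℤ) (D : Finset G) : augmentation G (DS n D) = #D := by
  simp [DS]

lemma augmentation_GS [Fintype G] : augmentation G (GS G) = Fintype.card G := by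
  simp [GS]

lemma coeff_DS_one [DecidableEq G] (D : Finset G) (g : G) :
    (DS 1 D).coeff g = if g ∈ D then 1 else 0 := by
  simp [DS, coeff_sum, sum_apply', Finsupp.single_apply]

lemma coeff_DS_nonneg (n : ℤ) (D : Finset G) (g : G) : 0 ≤ (DS n D).coeff g := by
  classical
  simp only [DS, coeff_sum, sum_apply', coeff_single, Finsupp.single_apply]
  exact sum_nonneg fun _ _ ↦ by split_ifs <;> norm_num

lemma coeff_GS [Fintype G] (g : G) : (GS G).coeff g = 1 := by
  simp [GS, coeff_sum, sum_apply']

lemma coeff_mul_GS [Fintype G] (f : AddMonoidAlgebra ℤ G) (g : G) :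
    (f * GS G).coeff g = augmentation G f := by
  simp [coeff_mul_apply_left, coeff_GS, augmentation_eq_sum]

lemma coeff_eq_of_mem_span_GS [Fintype G] {f : AddMonoidAlgebra ℤ G}
    (hf : f ∈ Ideal.span {GS G}) (g h : G) : f.coeff g = f.coeff h := by
  obtain ⟨r, rfl⟩ := Ideal.mem_span_singleton'.mp hf
  rw [coeff_mul_GS, coeff_mul_GS]

lemma abs_coeff_mul_self_zero_le [Fintype G] (f : AddMonoidAlgebra ℤ G)
    (hf : ∀ g, |f.coeff g| ≤ 1) (hf0 : f.coeff 0 = 0) :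
    |(f * f).coeff 0| ≤ Fintype.card G - 1 := by
  classical
  rw [coeff_mul_apply_left, Finsupp.sum_fintype _ _ (by simp)]
  calc |∑ g, f.coeff g * f.coeff (-g + 0)|
      ≤ ∑ g, |f.coeff g * f.coeff (-g + 0)| := abs_sum_le_sum_abs _ _
    _ ≤ ∑ g : G, (1 - if g = 0 then 1 else 0) := by
      refine sum_le_sum fun g _ ↦ ?_
      split_ifs with hg
      · simp [hg, hf0]
      · rw [abs_mul, sub_zero]
        exact mul_le_one₀ (hf g) (abs_nonneg _) (hf _)
    _ = Fintype.card G - 1 := by simp [sum_sub_distrib]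

lemma eq_zero_of_intCast_add_mul_mem_span_GS [Fintype G] {θ : AddMonoidAlgebra ℤ G} {g₁ g₂ : G}
    (hg₁ : g₁ ≠ 0) (hg₂ : g₂ ≠ 0) (h₁ : θ.coeff g₁ = 1) (h₂ : θ.coeff g₂ = -1) {x y : ℤ}
    (h : (x : AddMonoidAlgebra ℤ G) + y * θ ∈ Ideal.span {GS G}) : y = 0 := by
  classical
  have hc : y = -y := by
    simpa [intCast_def, coeff_single, hg₁.symm, hg₂.symm, h₁, h₂] using
      coeff_eq_of_mem_span_GS h g₁ g₂
  omega

end GroupRing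

lemma sum_range_two_mul {M : Type*} [AddCommMonoid M] (g : ℕ → M) (n : ℕ) :
    ∑ j ∈ range (2 * n), g j = ∑ f ∈ range n, (g (2 * f) + g (2 * f + 1)) := by
  induction n with
  | zero => simp
  | succ n ih =>
    rw [mul_add, mul_one, sum_range_succ, sum_range_succ, sum_range_succ, ih, add_assoc]

lemma neg_one_add_pow_of_sq_eq {R : Type*} [CommRing R] {T : R} {m : ℤ} (hT : T ^ 2 = m)
    {n : ℕ} (hn : Odd n) :
    (-1 + T) ^ n = -((∑ f ∈ range ((n - 1) / 2 + 1), (n.choose (2 * f) : ℤ) * m ^ f : ℤ) : R)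
      + ((∑ f ∈ range ((n - 1) / 2 + 1), (n.choose (2 * f + 1) : ℤ) * m ^ f : ℤ) : R) * T := by
  obtain ⟨M, rfl⟩ := hn
  rw [show (2 * M + 1 - 1) / 2 + 1 = M + 1 by omega, add_comm (-1) T, add_pow,
    show 2 * M + 1 + 1 = 2 * (M + 1) by ring, sum_range_two_mul]
  push_cast
  rw [← sum_neg_distrib, sum_mul, ← sum_add_distrib]
  refine sum_congr rfl fun f hf ↦ ?_
  have hfM : f ≤ M := Nat.lt_succ_iff.mp (mem_range.mp hf)
  have hT2f : T ^ (2 * f) = m ^ f := by rw [pow_mul, hT]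
  rw [pow_succ T, hT2f, Odd.neg_one_pow ⟨M - f, by omega⟩, Even.neg_one_pow ⟨M - f, by omega⟩]
  ring

section GSHDS

variable {G : Type} [AddCommGroup G] [Fintype G] {D : Finset G} {n₀ k₀ lam : ℤ}

lemma two_mul_card_eq (h2 : DS 1 D + DS n₀ D = GS G - 1) :
    2 * (#D : ℤ) = Fintype.card G - 1 := by
  have h := congrArg (augmentation G) h2
  simp only [map_add, map_sub, map_one, augmentation_DS, augmentation_GS] at h
  linarith

lemma card_mul_card_eq
    (h1 : DS 1 D * DS n₀ D = (k₀ - lam) • (1 : AddMonoidAlgebra ℤ G) + lam • GS G) :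
    (#D : ℤ) * #D = k₀ - lam + lam * Fintype.card G := by
  have h := congrArg (augmentation G) h1
  simpa only [map_mul, map_add, map_zsmul, map_one, augmentation_DS, augmentation_GS,
    smul_eq_mul, mul_one] using h

lemma coeff_DS_add_DS [DecidableEq G] (h2 : DS 1 D + DS n₀ D = GS G - 1) (g : G) :
    (DS 1 D).coeff g + (DS n₀ D).coeff g = if g = 0 then 0 else 1 := by
  have h := congrArg (fun f ↦ f.coeff g) h2
  simp only [coeff_add, coeff_sub, Finsupp.add_apply, Finsupp.sub_apply, coeff_GS] at h
  rw [h, one_def, coeff_single, Finsupp.single_apply]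
  by_cases hg : g = 0 <;> simp [hg, eq_comm]

lemma zero_notMem_of_DS_add_DS (h2 : DS 1 D + DS n₀ D = GS G - 1) : (0 : G) ∉ D := by
  classical
  intro h0
  have h := coeff_DS_add_DS h2 0
  rw [coeff_DS_one, if_pos h0, if_pos rfl] at h
  linarith [coeff_DS_nonneg n₀ D 0]

lemma coeff_DS_sub_DS [DecidableEq G] (h2 : DS 1 D + DS n₀ D = GS G - 1) (g : G) :
    (DS 1 D - DS n₀ D).coeff g = if g = 0 then 0 else if g ∈ D then 1 else -1 := by
  have h := coeff_DS_add_DS h2 g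
  rw [coeff_DS_one] at h
  rw [coeff_sub, Finsupp.sub_apply, coeff_DS_one]
  have := zero_notMem_of_DS_add_DS h2
  split_ifs at h ⊢ <;> grind

lemma coeff_DS_sub_DS_sq_zero
    (h1 : DS 1 D * DS n₀ D = (k₀ - lam) • (1 : AddMonoidAlgebra ℤ G) + lam • GS G)
    (h2 : DS 1 D + DS n₀ D = GS G - 1) :
    ((DS 1 D - DS n₀ D) ^ 2).coeff 0 = Fintype.card G - 1 - 4 * k₀ := by
  have h : (DS 1 D - DS n₀ D) ^ 2 = GS G * GS G - 2 * GS G + 1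
      - 4 * ((k₀ - lam) • (1 : AddMonoidAlgebra ℤ G) + lam • GS G) := by
    rw [← h1]; linear_combination (DS 1 D + DS n₀ D + GS G - 1) * h2
  classical
  simp only [h, ofNat_def, one_def, smul_single, mul_one, single_sub,
    zsmul_eq_mul, coeff_sub, coeff_add, coeff_single, Finsupp.coe_sub, Finsupp.coe_add,
    Pi.sub_apply, Pi.add_apply, coeff_mul_GS, augmentation_GS, coeff_single_mul_apply, neg_zero,
    add_zero, coeff_GS, Finsupp.single_eq_same, map_intCast, Int.cast_eq]
  ring

lemma exists_one_sub_four_mul_eq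
    (h1 : DS 1 D * DS n₀ D = (k₀ - lam) • (1 : AddMonoidAlgebra ℤ G) + lam • GS G)
    (h2 : DS 1 D + DS n₀ D = GS G - 1) (hG : 1 < Fintype.card G) :
    ∃ t : ℤ, |t| ≤ 1 ∧ 1 - 4 * (k₀ - lam) = Fintype.card G * t := by
  classical
  set N : ℤ := (Fintype.card G : ℤ)
  have hm : 1 - 4 * (k₀ - lam) = N * (4 * lam + 2 - N) := by
    linear_combination (-(2 * (#D : ℤ)) - N + 1) * two_mul_card_eq h2 + 4 * card_mul_card_eq h1
  refine ⟨4 * lam + 2 - N, ?_, hm⟩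
  have hbound := abs_coeff_mul_self_zero_le (DS 1 D - DS n₀ D)
    (fun g ↦ by rw [coeff_DS_sub_DS h2]; split_ifs <;> simp)
    (by rw [coeff_DS_sub_DS h2, if_pos rfl])
  rw [← sq, coeff_DS_sub_DS_sq_zero h1 h2,
    show N - 1 - 4 * k₀ = (N - 1) * (4 * lam + 2 - N) by linear_combination hm,
    abs_mul, abs_of_pos (by omega : (0 : ℤ) < N - 1)] at hbound
  exact le_of_mul_le_mul_left (by linarith) (by omega : (0 : ℤ) < N - 1)

lemma exists_mem_and_exists_notMem (h2 : DS 1 D + DS n₀ D = GS G - 1)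
    (hG : 1 < Fintype.card G) : (∃ g₁ ∈ D, g₁ ≠ 0) ∧ ∃ g₂ ∉ D, g₂ ≠ 0 := by
  classical
  have hD := two_mul_card_eq h2
  have h0 := zero_notMem_of_DS_add_DS h2
  refine ⟨?_, ?_⟩
  · obtain ⟨g₁, hg₁⟩ := card_pos.mp (by omega : 0 < #D)
    exact ⟨g₁, hg₁, fun h ↦ h0 (h ▸ hg₁)⟩
  · obtain ⟨g₂, -, hg₂⟩ := exists_mem_notMem_of_card_lt_card
      (s := insert 0 D) (t := univ) (by rw [card_insert_of_notMem h0, card_univ]; omega)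
    exact ⟨g₂, fun h ↦ hg₂ (mem_insert_of_mem h), fun h ↦ hg₂ (h ▸ mem_insert_self _ _)⟩

lemma two_pow_mul_sub_eq_sum
    (h1 : DS 1 D * DS n₀ D = (k₀ - lam) • (1 : AddMonoidAlgebra ℤ G) + lam • GS G)
    (h2 : DS 1 D + DS n₀ D = GS G - 1) (hG : 1 < Fintype.card G) {n : ℕ} (hn : Odd n)
    {a b c : ℤ} (hpow : DS 1 D ^ n = c • (1 : AddMonoidAlgebra ℤ G) + a • DS 1 D + b • DS n₀ D) :
    2 ^ (n - 1) * (a - b) =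
      ∑ f ∈ range ((n - 1) / 2 + 1), (n.choose (2 * f + 1) : ℤ) * (1 - 4 * (k₀ - lam)) ^ f := by
  classical
  set π := Ideal.Quotient.mk (Ideal.span {GS G})
  have hΓ : π (GS G) = 0 := Ideal.Quotient.eq_zero_iff_mem.mpr (Ideal.mem_span_singleton_self _)
  have e1 := congrArg π h1
  have e2 := congrArg π h2
  have ep := congrArg π hpow
  simp only [map_add, map_sub, map_mul, map_pow, map_one, map_intCast, hΓ, mul_zero, add_zero,
    zsmul_eq_mul, mul_one, zero_sub] at e1 e2 ep
  set A := π (DS 1 D)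
  set B := π (DS n₀ D)
  have hA : 2 * A = -1 + (A - B) := by linear_combination e2
  have hB : 2 * B = -1 - (A - B) := by linear_combination e2
  have hT2 : (A - B) ^ 2 = ((1 - 4 * (k₀ - lam) : ℤ) : _) := by
    push_cast at e1 ⊢; linear_combination (A + B - 1) * e2 - 4 * e1
  have hexp := neg_one_add_pow_of_sq_eq hT2 hn
  set S₀ := ∑ f ∈ range ((n - 1) / 2 + 1), (n.choose (2 * f) : ℤ) * (1 - 4 * (k₀ - lam)) ^ f
  set S₁ := ∑ f ∈ range ((n - 1) / 2 + 1), (n.choose (2 * f + 1) : ℤ) * (1 - 4 * (k₀ - lam)) ^ f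
  obtain ⟨M, rfl⟩ := hn
  rw [Nat.add_sub_cancel]
  have hA' : (2 * A) ^ (2 * M + 1) = (-1 + (A - B)) ^ (2 * M + 1) := by rw [hA]
  -- `(2 D(x))ⁿ` computed from `hpow` and from the binomial expansion of `(-1 + θ)ⁿ`
  have key : π ((2 ^ (2 * M) * (2 * c - a - b) + S₀ : ℤ)
      + (2 ^ (2 * M) * (a - b) - S₁ : ℤ) * (DS 1 D - DS n₀ D)) = 0 := by
    rw [map_add, map_mul, map_intCast, map_intCast, map_sub]
    push_cast
    linear_combination hexp + hA' - 2 ^ (2 * M + 1) * ep - 2 ^ (2 * M) * a * hA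
      - 2 ^ (2 * M) * b * hB
  obtain ⟨⟨g₁, hg₁D, hg₁⟩, ⟨g₂, hg₂D, hg₂⟩⟩ := exists_mem_and_exists_notMem h2 hG
  have hy := eq_zero_of_intCast_add_mul_mem_span_GS hg₁ hg₂
    (by rw [coeff_DS_sub_DS h2, if_neg hg₁, if_pos hg₁D])
    (by rw [coeff_DS_sub_DS h2, if_neg hg₂, if_neg hg₂D])
    (Ideal.Quotient.eq_zero_iff_mem.mp key)
  linarith

end GSHDS

lemma eq_of_mul_modEq_four {N t ε : ℤ} (ht : |t| ≤ 1) (hε : ε = 1 ∨ ε = -1)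
    (h₁ : N * t ≡ 1 [ZMOD 4]) (h₂ : N * ε ≡ 1 [ZMOD 4]) : t = ε := by
  unfold Int.ModEq at h₁ h₂
  rcases abs_le.mp ht with ⟨ht₁, ht₂⟩
  obtain rfl | rfl | rfl : t = -1 ∨ t = 0 ∨ t = 1 := by omega
  all_goals rcases hε with rfl | rfl <;> omega

lemma pow_mul_neg_one_pow_modEq_one {p e : ℕ} (hp : Odd p) (he : Odd e) :
    (p : ℤ) ^ e * (-1) ^ ((p - 1) / 2) ≡ 1 [ZMOD 4] := by
  obtain ⟨q, rfl⟩ := hp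
  obtain ⟨r, rfl⟩ := he
  have hsq : ((2 * q + 1 : ℕ) : ℤ) ^ 2 ≡ 1 [ZMOD 4] := by
    push_cast; exact (Int.modEq_iff_dvd.mpr ⟨-(q * q + q), by ring⟩)
  rw [show (2 * q + 1 - 1) / 2 = q by omega, pow_succ, pow_mul]
  calc _ ≡ 1 ^ r * (2 * q + 1 : ℤ) * (-1) ^ q [ZMOD 4] := by push_cast at hsq ⊢; gcongr
    _ ≡ 1 [ZMOD 4] := by
      rcases q.even_or_odd with ⟨j, rfl⟩ | ⟨j, rfl⟩
      · rw [Even.neg_one_pow ⟨j, rfl⟩]; exact Int.modEq_iff_dvd.mpr ⟨-j, by push_cast; ring⟩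
      · rw [Odd.neg_one_pow ⟨j, rfl⟩]; exact Int.modEq_iff_dvd.mpr ⟨j + 1, by push_cast; ring⟩

lemma pow_succ_dvd_sum_sub_pow (p k e : ℕ) (hke : k < e) (ε : ℤ) :
    (p : ℤ) ^ (k + 1) ∣ (∑ f ∈ range ((p ^ k - 1) / 2 + 1),
      ((p ^ k).choose (2 * f + 1) : ℤ) * (p : ℤ) ^ (e * f) * ε ^ f) - (p : ℤ) ^ k := by
  rw [sum_range_succ', add_sub_assoc]
  simp only [mul_zero, zero_add, Nat.choose_one_right, Nat.cast_pow, pow_zero, mul_one, sub_self,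
    add_zero]
  exact dvd_sum fun f _ ↦ (dvd_mul_of_dvd_right (pow_dvd_pow _ (by nlinarith)) _).mul_right _

lemma pow_dvd_and_not_pow_succ_dvd {p k j : ℕ} (hp : 1 < p) (hodd : Odd p) {x S : ℤ}
    (hx : 2 ^ j * x = S) (hS : (p : ℤ) ^ (k + 1) ∣ S - (p : ℤ) ^ k) :
    (p : ℤ) ^ k ∣ x ∧ ¬ (p : ℤ) ^ (k + 1) ∣ x := by
  have hp2 : IsCoprime (p : ℤ) 2 := by
    exact_mod_cast Nat.isCoprime_iff_coprime.mpr hodd.coprime_two_right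
  have hcop : IsCoprime ((p : ℤ) ^ k) (2 ^ j) := hp2.pow
  constructor
  · refine hcop.dvd_of_dvd_mul_left (hx ▸ ?_)
    simpa using (dvd_sub_self_right.mp ((pow_dvd_pow _ k.le_succ).trans hS))
  · intro hdvd
    have h : (p : ℤ) ^ (k + 1) ∣ (p : ℤ) ^ k := by
      simpa [← hx] using (dvd_sub_right (hx ▸ hdvd.mul_left _)).mp hS
    have := Int.le_of_dvd (by positivity) h
    have := pow_lt_pow_right₀ (by exact_mod_cast hp : (1 : ℤ) < p) (Nat.lt_add_one k)
    omega

theorem stmt_19_general (p s α k : ℕ) (hp : p.Prime) (hodd : Odd p) (hks : k ≤ s - 1)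
    (G : Type) [AddCommGroup G] [Fintype G]
    (hcard : Fintype.card G = p ^ (2 * α + 1))
    (hexp : AddMonoid.exponent G = p ^ s)
    (D : Finset G) (n₀ k₀ lam : ℤ)
    (h1 : DS 1 D * DS n₀ D
        = (k₀ - lam) • (1 : AddMonoidAlgebra ℤ G) + lam • GS G)
    (h2 : DS 1 D + DS n₀ D = GS G - 1)
    (a b c : ℤ) (ε : ℤ) (hε : ε = (-1 : ℤ) ^ ((p - 1) / 2))
    (hpow : DS 1 D ^ (p ^ k)
        = c • (1 : AddMonoidAlgebra ℤ G) + a • DS 1 D + b • DS n₀ D) :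
    (2 : ℤ) ^ (p ^ k - 1) * (a - b)
      = ∑ f ∈ Finset.range ((p ^ k - 1) / 2 + 1),
          ((p ^ k).choose (2 * f + 1) : ℤ) * (p : ℤ) ^ ((2 * α + 1) * f) * ε ^ f ∧
    (p : ℤ) ^ k ∣ (a - b) ∧ ¬ (p : ℤ) ^ (k + 1) ∣ (a - b) := by
  have hG : 1 < Fintype.card G := hcard ▸ Nat.one_lt_pow (by omega) hp.one_lt
  have hke : k < 2 * α + 1 := by
    have := (Nat.pow_dvd_pow_iff_le_right hp.one_lt).mp (hexp ▸ hcard ▸ AddGroup.exponent_dvd_card)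
    omega
  obtain ⟨t, ht, hm⟩ := exists_one_sub_four_mul_eq h1 h2 hG
  rw [hcard, Nat.cast_pow] at hm
  have htε : t = ε := eq_of_mul_modEq_four ht (hε ▸ neg_one_pow_eq_or ℤ _)
    (hm ▸ Int.modEq_iff_dvd.mpr ⟨k₀ - lam, by ring⟩)
    (hε ▸ pow_mul_neg_one_pow_modEq_one hodd (odd_two_mul_add_one α))
  have hsum : (2 : ℤ) ^ (p ^ k - 1) * (a - b) = ∑ f ∈ range ((p ^ k - 1) / 2 + 1),
      ((p ^ k).choose (2 * f + 1) : ℤ) * (p : ℤ) ^ ((2 * α + 1) * f) * ε ^ f := by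
    simp only [two_pow_mul_sub_eq_sum h1 h2 hG hodd.pow hpow, hm, htε, mul_pow, pow_mul, mul_assoc]
  exact ⟨hsum, pow_dvd_and_not_pow_succ_dvd hp.one_lt hodd hsum
    (pow_succ_dvd_sum_sub_pow p k _ hke ε)⟩

/-- For a GSHDS D in an abelian p-group G of order p^{2α+1} and exponent
p^s (p odd), with 0 ≤ k ≤ s−1 and D(x)^{p^k} = c·1 + a·D(x) + b·D(x^{n₀}), one has
2^{p^k−1}·(a − b) = Σ_{f=0}^{(p^k−1)/2} C(p^k, 2f+1)·p^{(2α+1)f}·χₚ(−1)^f, and the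
exact power of p dividing a − b is p^k. -/
theorem stmt_19 (p s α k : ℕ) (hp : p.Prime) (hodd : Odd p) (hks : k ≤ s - 1)
    (G : Type) [AddCommGroup G] [Fintype G]
    (hcard : Fintype.card G = p ^ (2 * α + 1))
    (hexp : AddMonoid.exponent G = p ^ s)
    (D : Finset G) (n₀ k₀ lam : ℤ)
    (hunit : IsUnit (n₀ : ZMod (p ^ s)))
    (hnres : ¬ ∃ m : ZMod (p ^ s), m ^ 2 = (n₀ : ZMod (p ^ s)))
    (h1 : DS 1 D * DS n₀ D
        = (k₀ - lam) • (1 : AddMonoidAlgebra ℤ G) + lam • GS G)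
    (h2 : DS 1 D + DS n₀ D = GS G - 1)
    (a b c : ℤ) (ε : ℤ) (hε : ε = (-1 : ℤ) ^ ((p - 1) / 2))
    (hpow : DS 1 D ^ (p ^ k)
        = c • (1 : AddMonoidAlgebra ℤ G) + a • DS 1 D + b • DS n₀ D) :
    (2 : ℤ) ^ (p ^ k - 1) * (a - b)
      = ∑ f ∈ Finset.range ((p ^ k - 1) / 2 + 1),
          ((p ^ k).choose (2 * f + 1) : ℤ) * (p : ℤ) ^ ((2 * α + 1) * f) * ε ^ f ∧
    (p : ℤ) ^ k ∣ (a - b) ∧ ¬ (p : ℤ) ^ (k + 1) ∣ (a - b) :=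
  stmt_19_general p s α k hp hodd hks G hcard hexp D n₀ k₀ lam h1 h2 a b c ε hε hpow
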